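/- arXiv:2210.11756 — 5 statements merged into one kernel-verified Lean document; each statement's English description precedes it below -/
import Mathlib

section
/- Let $\kappa, \mu, b, \rho_s > 0$ and set $\omega_0 = -\frac{b\rho_s^2}{\mu + \kappa b \rho_s^2}$. For each $n \geq 1$, let $\lambda_n^1 \in (-1/\kappa, 0)$ be a real root of $\mathcal{F}_n(\lambda) = \lambda^3 + \frac{1}{\kappa}\lambda^2 + \left(\frac{\mu}{\kappa\rho_s} + b\rho_s\right)n^2\lambda + \frac{b\rho_s}{\kappa}n^2$. Then $\lambda_n^1 \to \omega_0$ as $n \to \infty$. -/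
/-!
Dividing `𝓕ₙ(λ) = 0` by `n²` shows that `(λ - ω₀) · c n² = -λ²(λ + 1/κ)`, where
`c = μ/(κρs) + bρs` is the coefficient of `n² λ` and `ω₀ c = -bρs/κ`. On `(-1/κ, 0)` the
right-hand side is bounded by `1/κ³`, so `|λₙ - ω₀| ≤ 1/(κ³ c n²) → 0`.
-/

open Filter Topology

theorem Filter.Tendsto.of_abs_sub_mul_le {α : Type*} {l : Filter α} {x g : α → ℝ} {L C : ℝ}
    (hg : Tendsto g l atTop) (h : ∀ᶠ a in l, |(x a - L) * g a| ≤ C) :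
    Tendsto x l (𝓝 L) := by
  have hdist : Tendsto (fun a => x a - L) l (𝓝 0) := by
    refine squeeze_zero_norm' ?_ ((tendsto_const_nhds (x := C)).div_atTop hg)
    filter_upwards [h, hg.eventually_gt_atTop 0] with a ha hga
    rwa [Real.norm_eq_abs, le_div_iff₀ hga, ← abs_of_pos hga, ← abs_mul]
  simpa using hdist.add_const L

theorem sub_mul_eq_of_cubic_eq_zero {κ μ b ρs lam s : ℝ} (hκ : κ ≠ 0) (hρs : ρs ≠ 0)
    (hden : μ + κ * b * ρs ^ 2 ≠ 0)
    (hroot : lam ^ 3 + (1/κ) * lam ^ 2 + (μ/(κ*ρs) + b*ρs) * s ^ 2 * lam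
      + (b*ρs/κ) * s ^ 2 = 0) :
    (lam - -(b * ρs ^ 2) / (μ + κ * b * ρs ^ 2)) * ((μ/(κ*ρs) + b*ρs) * s ^ 2)
      = -(lam ^ 2 * (lam + 1/κ)) := by
  have hω : -(b * ρs ^ 2) / (μ + κ * b * ρs ^ 2) * (μ/(κ*ρs) + b*ρs) = -(b*ρs/κ) := by
    rw [div_mul_eq_mul_div, div_eq_iff hden]
    field_simp
  linear_combination hroot - s ^ 2 * hω

theorem abs_sq_mul_add_inv_le {κ lam : ℝ} (hκ : 0 < κ) (hlam : lam ∈ Set.Ioo (-1/κ) 0) :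
    |lam ^ 2 * (lam + 1/κ)| ≤ 1 / κ ^ 3 := by
  obtain ⟨hlo, hhi⟩ := hlam
  have hshift : 0 < lam + 1/κ := by rw [neg_div] at hlo; linarith
  have hsq : lam ^ 2 ≤ (1/κ) ^ 2 := by
    rw [sq_le_sq, abs_of_pos (by positivity : 0 < 1/κ), abs_of_neg hhi]
    rw [neg_div] at hlo
    linarith
  calc |lam ^ 2 * (lam + 1/κ)| = lam ^ 2 * (lam + 1/κ) := abs_of_nonneg (by positivity)
    _ ≤ (1/κ) ^ 2 * (1/κ) := by gcongr; linarith
    _ = 1 / κ ^ 3 := by ring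

/-- Any sequence `λ_n¹ ∈ (-1/κ, 0)` of real roots of `F_n` converges to
`ω₀ = -bρs²/(μ + κbρs²)` as `n → ∞`. -/
theorem stmt_3 (κ μ b ρs : ℝ) (hκ : 0 < κ) (hμ : 0 < μ) (hb : 0 < b) (hρs : 0 < ρs)
    (lam : ℕ → ℝ)
    (hmem : ∀ n : ℕ, 1 ≤ n → lam n ∈ Set.Ioo (-1/κ) 0)
    (hroot : ∀ n : ℕ, 1 ≤ n →
      (lam n) ^ 3 + (1/κ) * (lam n) ^ 2 + (μ/(κ*ρs) + b*ρs) * (n:ℝ)^2 * lam n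
        + (b*ρs/κ) * (n:ℝ)^2 = 0) :
    Filter.Tendsto lam Filter.atTop (nhds (-(b * ρs^2) / (μ + κ * b * ρs^2))) := by
  have hc : 0 < μ/(κ*ρs) + b*ρs := by positivity
  have hgrowth : Tendsto (fun n : ℕ => (μ/(κ*ρs) + b*ρs) * (n:ℝ) ^ 2) atTop atTop :=
    ((tendsto_pow_atTop two_ne_zero).comp tendsto_natCast_atTop_atTop).const_mul_atTop hc
  refine hgrowth.of_abs_sub_mul_le (C := 1 / κ ^ 3) ?_
  filter_upwards [eventually_ge_atTop 1] with n hn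
  rw [sub_mul_eq_of_cubic_eq_zero hκ.ne' hρs.ne' (by positivity) (hroot n hn), abs_neg]
  exact abs_sq_mul_add_inv_le hκ (hmem n hn)
end

section
/- Let $\kappa, \mu, b, \rho_s > 0$. There are only finitely many $n \in \mathbb{N}$ for which the polynomial $\mathcal{F}_n(\lambda) = \lambda^3 + \frac{1}{\kappa}\lambda^2 + \left(\frac{\mu}{\kappa\rho_s} + b\rho_s\right)n^2\lambda + \frac{b\rho_s}{\kappa}n^2$ has a repeated root. -/
/-!
A common root of `F_n` and `F_n'` makes the resultant of `F_n` and `F_n'`, hence the discriminant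
of `F_n`, vanish. The two lower coefficients of `F_n` are linear in `t = n²`, so its discriminant
is a cubic polynomial in `t` with leading coefficient `-4 c³ ≠ 0`, where `c = μ/(κρₛ) + bρₛ`; it
therefore vanishes for at most three values of `n²`.
-/

open Polynomial

theorem Polynomial.discr_eq_zero_of_isRoot_derivative {R : Type*} [CommRing R] [IsDomain R]
    {f : R[X]} (hf : f ≠ 0) {x : R} (hx : f.IsRoot x) (hx' : f.derivative.IsRoot x) :
    f.discr = 0 := by
  have hdeg : 0 < f.natDegree := by
    by_contra! h
    rw [eq_C_of_natDegree_le_zero h] at hx hf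
    exact hf (by simpa using hx)
  obtain ⟨p, q, -, -, hpq⟩ := exists_mul_add_mul_eq_C_resultant f f.derivative le_rfl
    (natDegree_derivative_le f) (.inl hdeg.ne')
  have hres : resultant f f.derivative f.natDegree (f.natDegree - 1) = 0 := by
    simpa [hx.eq_zero, hx'.eq_zero, eq_comm] using congr_arg (eval x) hpq
  rw [resultant_deriv (natDegree_pos_iff_degree_pos.mp hdeg)] at hres
  simpa [hf] using hres

theorem Cubic.discr_toPoly {R : Type*} [CommRing R] {P : Cubic R} (ha : P.a ≠ 0) :
    P.toPoly.discr = P.discr := by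
  rw [discr_of_degree_eq_three (Cubic.degree_of_a_ne_zero ha), Cubic.coeff_eq_a, Cubic.coeff_eq_b,
    Cubic.coeff_eq_c, Cubic.coeff_eq_d, Cubic.discr]

theorem Cubic.discr_eq_zero_of_isRoot_derivative {R : Type*} [CommRing R] [IsDomain R]
    {P : Cubic R} (ha : P.a ≠ 0) {x : R} (hx : P.toPoly.IsRoot x)
    (hx' : P.toPoly.derivative.IsRoot x) : P.discr = 0 := by
  rw [← Cubic.discr_toPoly ha]
  exact Polynomial.discr_eq_zero_of_isRoot_derivative (Cubic.ne_zero_of_a_ne_zero ha) hx hx'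

theorem Cubic.discr_mk_one_mul_eq_eval {R : Type*} [CommRing R] (a c d t : R) :
    (⟨1, a, c * t, d * t⟩ : Cubic R).discr =
      (⟨-4 * c ^ 3, a ^ 2 * c ^ 2 + 18 * a * c * d - 27 * d ^ 2, -4 * a ^ 3 * d, 0⟩ :
        Cubic R).toPoly.eval t := by
  simp only [Cubic.discr, Cubic.toPoly, eval_add, eval_mul, eval_C, eval_pow, eval_X]
  ring

theorem Cubic.finite_setOf_discr_mk_one_mul_eq_zero {K : Type*} [Field K] [CharZero K]
    (a : K) {c : K} (hc : c ≠ 0) (d : K) :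
    {t : K | (⟨1, a, c * t, d * t⟩ : Cubic K).discr = 0}.Finite := by
  simp_rw [Cubic.discr_mk_one_mul_eq_eval]
  exact finite_setOfPred_isRoot (Cubic.ne_zero_of_a_ne_zero (by simpa using hc))

/-- There are only finitely many `n` for which `F_n` has a repeated root
(i.e. a common root of `F_n` and `F_n'`). -/
theorem stmt_6 (κ μ b ρs : ℝ) (hκ : 0 < κ) (hμ : 0 < μ) (hb : 0 < b) (hρs : 0 < ρs) :
    {n : ℕ | ∃ lam : ℂ,
      lam ^ 3 + (1/(κ:ℂ)) * lam ^ 2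
        + ((μ/(κ*ρs) + b*ρs : ℝ) : ℂ) * (n:ℂ)^2 * lam
        + ((b*ρs/κ : ℝ) : ℂ) * (n:ℂ)^2 = 0
      ∧ 3 * lam ^ 2 + (2/(κ:ℂ)) * lam
        + ((μ/(κ*ρs) + b*ρs : ℝ) : ℂ) * (n:ℂ)^2 = 0}.Finite := by
  set c : ℂ := ((μ/(κ*ρs) + b*ρs : ℝ) : ℂ)
  set d : ℂ := ((b*ρs/κ : ℝ) : ℂ)
  have hc : c ≠ 0 := Complex.ofReal_ne_zero.mpr (by positivity)
  have hsq : Function.Injective fun n : ℕ => (n : ℂ) ^ 2 := fun m n h =>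
    Nat.pow_left_injective two_ne_zero (by simpa only [← Nat.cast_pow, Nat.cast_inj] using h)
  refine ((Cubic.finite_setOf_discr_mk_one_mul_eq_zero (1 / κ : ℂ) hc d).preimage
    hsq.injOn).subset ?_
  rintro n ⟨lam, hF, hF'⟩
  refine Cubic.discr_eq_zero_of_isRoot_derivative one_ne_zero (x := lam) ?_ ?_
  · simp only [Cubic.toPoly, IsRoot, eval_add, eval_mul, eval_C, eval_pow, eval_X]
    linear_combination hF
  · simp only [Cubic.toPoly, IsRoot, derivative_add, derivative_mul, derivative_C, derivative_X_pow,
      derivative_X, eval_add, eval_mul, eval_C, eval_pow, eval_X, eval_zero, eval_one]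
    linear_combination hF'
end

section
/- Define $\varphi(x) = \frac{i}{2}(x-x_0)^2 + (x - x_0)$ for fixed $x_0 \in \mathbb{R}$, and for $k \in \mathbb{N}$ and a bounded function $\eta \in C^1_b(\mathbb{R})$ let $\sigma_k(x) = k^{-3/4}\partial_x\left(e^{ik\varphi(x)}\eta(x)\right)$. Then there is a constant $C > 0$ depending only on $\|\eta\|_{\infty}$ and $\|\eta'\|_{\infty}$ such that for all $k \in \mathbb{N}$, $\int_{|x - x_0| > k^{-1/4}} |\sigma_k(x)|^2\,dx \leq C e^{-\sqrt{k}/2}$. -/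
open MeasureTheory Complex

/-- Concentration estimate for the Gaussian beam
`σ_k(x) = k^{-3/4} ∂ₓ(e^{ikφ(x)} η(x))`, `φ(x) = (i/2)(x-x₀)² + (x-x₀)`:
the mass outside `|x - x₀| ≤ k^{-1/4}` is at most `C e^{-√k/2}` with `C` depending
only on the sup norms of `η` and `η'`. -/
theorem stmt_10 (x0 : ℝ) (η : ℝ → ℂ) (hη : Differentiable ℝ η) (Cb : ℝ)
    (hbound : ∀ x, ‖η x‖ ≤ Cb ∧ ‖deriv η x‖ ≤ Cb) :
    ∃ C > 0, ∀ k : ℕ, 1 ≤ k →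
      (∫ x in {x : ℝ | (k:ℝ) ^ (-(1:ℝ)/4) < |x - x0|},
        ‖(((k:ℝ) ^ (-(3:ℝ)/4) : ℝ) : ℂ) *
          deriv (fun y : ℝ =>
            Complex.exp (Complex.I * (k:ℂ) *
              ((Complex.I/2) * ((y:ℂ) - (x0:ℂ))^2 + ((y:ℂ) - (x0:ℂ)))) * η y) x‖^2)
      ≤ C * Real.exp (-(Real.sqrt k)/2) := by
  have hCb0 : 0 ≤ Cb := le_trans (norm_nonneg _) (hbound 0).1
  refine ⟨32 * Real.sqrt Real.pi * Cb ^ 2 + 1, by positivity, ?_⟩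
  intro k hk
  have hk0 : (0:ℝ) < (k:ℝ) := by exact_mod_cast Nat.lt_of_lt_of_le Nat.zero_lt_one hk
  have hk1 : (1:ℝ) ≤ (k:ℝ) := by exact_mod_cast hk
  set F : ℝ → ℂ := fun y : ℝ =>
    Complex.exp (Complex.I * (k:ℂ) *
      ((Complex.I/2) * ((y:ℂ) - (x0:ℂ))^2 + ((y:ℂ) - (x0:ℂ)))) * η y with hF
  set S : Set ℝ := {x : ℝ | (k:ℝ) ^ (-(1:ℝ)/4) < |x - x0|} with hS
  have hSmeas : MeasurableSet S := by
    apply measurableSet_lt measurable_const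
    exact (measurable_id.sub_const x0).abs
  -- derivative formula
  have hder : ∀ x : ℝ, HasDerivAt F
      (Complex.exp (Complex.I * (k:ℂ) *
        ((Complex.I/2) * ((x:ℂ) - (x0:ℂ))^2 + ((x:ℂ) - (x0:ℂ)))) *
        ((Complex.I * (k:ℂ) * (Complex.I * ((x:ℂ) - (x0:ℂ)) + 1)) * η x + deriv η x)) x := by
    intro x
    rw [hF]
    simp only [pow_two]
    have hc : HasDerivAt (fun y : ℝ => (y:ℂ)) 1 x := by
      simpa using (hasDerivAt_id x).ofReal_comp
    have hs : HasDerivAt (fun y : ℝ => (y:ℂ) - (x0:ℂ)) 1 x := hc.sub_const _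
    have hsq := hs.mul hs
    have hg := ((hsq.const_mul (Complex.I/2)).add hs).const_mul (Complex.I * (k:ℂ))
    have he := hg.cexp
    have := he.mul (hη x).hasDerivAt
    convert this using 1
    · rfl
    · rfl
    · simp only [Pi.add_apply, Pi.mul_apply]
      ring
  -- norm of the exponential factor
  have hnexp : ∀ x : ℝ, ‖Complex.exp (Complex.I * (k:ℂ) *
      ((Complex.I/2) * ((x:ℂ) - (x0:ℂ))^2 + ((x:ℂ) - (x0:ℂ))))‖
      = Real.exp (-((k:ℝ) * (x - x0)^2) / 2) := by
    intro x
    rw [Complex.norm_exp]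
    congr 1
    simp only [pow_two, Complex.mul_re, Complex.mul_im, Complex.add_re, Complex.add_im,
      Complex.sub_re, Complex.sub_im, Complex.I_re, Complex.I_im, Complex.ofReal_re,
      Complex.ofReal_im, Complex.div_re, Complex.div_im, Complex.normSq_ofNat,
      Complex.re_ofNat, Complex.im_ofNat, Complex.natCast_re, Complex.natCast_im]
    norm_num
    ring
  -- the majorant
  set M : ℝ → ℝ := fun x => Real.exp (-(Real.sqrt k)/2) *
      (16 * Cb ^ 2 * (k:ℝ) ^ ((1:ℝ)/2) * Real.exp (-((k:ℝ)/4) * (x - x0)^2)) with hM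
  have hMint : Integrable M := by
    have h1 : Integrable (fun x : ℝ => Real.exp (-((k:ℝ)/4) * x ^ 2)) :=
      integrable_exp_neg_mul_sq (by positivity)
    exact ((h1.comp_sub_right x0).const_mul _).const_mul _
  -- pointwise bound on S
  have hpoint : ∀ x ∈ S,
      ‖(((k:ℝ) ^ (-(3:ℝ)/4) : ℝ) : ℂ) * deriv F x‖^2 ≤ M x := by
    intro x hx
    have hxS : (k:ℝ) ^ (-(1:ℝ)/4) < |x - x0| := hx
    set s : ℝ := x - x0 with hsdef
    clear_value s
    -- norm of deriv
    have hD : ‖deriv F x‖ ≤ Real.exp (-((k:ℝ) * s^2) / 2) * ((k:ℝ) * (|s| + 2) * Cb) := by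
      rw [(hder x).deriv]
      rw [norm_mul, hnexp x, ← hsdef]
      refine mul_le_mul_of_nonneg_left ?_ (Real.exp_nonneg _)
      calc ‖(Complex.I * (k:ℂ) * (Complex.I * ((x:ℂ) - (x0:ℂ)) + 1)) * η x + deriv η x‖
            ≤ ‖Complex.I * (k:ℂ) * (Complex.I * ((x:ℂ) - (x0:ℂ)) + 1)‖ * ‖η x‖ + ‖deriv η x‖ := by
              refine le_trans (norm_add_le _ _) ?_
              rw [norm_mul]
          _ ≤ ((k:ℝ) * (|s| + 1)) * Cb + Cb := by
              gcongr
              · rw [norm_mul, norm_mul]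
                simp only [Complex.norm_I, Complex.norm_natCast, one_mul]
                gcongr
                calc ‖Complex.I * ((x:ℂ) - (x0:ℂ)) + 1‖
                    ≤ ‖Complex.I * ((x:ℂ) - (x0:ℂ))‖ + ‖(1:ℂ)‖ := norm_add_le _ _
                  _ = |s| + 1 := by
                      rw [norm_mul, Complex.norm_I, one_mul, norm_one]
                      congr 1
                      rw [show ((x:ℂ) - (x0:ℂ)) = ((s:ℝ):ℂ) by push_cast [hsdef]; ring]
                      exact Complex.norm_real s ▸ Real.norm_eq_abs s
              · exact (hbound x).1
              · exact (hbound x).2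
          _ ≤ (k:ℝ) * (|s| + 2) * Cb := by nlinarith [abs_nonneg s]
    -- square it
    have habs : |(k:ℝ) ^ (-(3:ℝ)/4)| = (k:ℝ) ^ (-(3:ℝ)/4) :=
      abs_of_nonneg (Real.rpow_nonneg hk0.le _)
    have hnn : (0:ℝ) ≤ (k:ℝ) ^ (-(3:ℝ)/4) := Real.rpow_nonneg hk0.le _
    have step1 : ‖(((k:ℝ) ^ (-(3:ℝ)/4) : ℝ) : ℂ) * deriv F x‖^2
        ≤ ((k:ℝ) ^ (-(3:ℝ)/4))^2 * (Real.exp (-((k:ℝ) * s^2) / 2) * ((k:ℝ) * (|s| + 2) * Cb))^2 := by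
      rw [norm_mul, Complex.norm_real, Real.norm_eq_abs, habs, mul_pow]
      gcongr
    refine step1.trans ?_
    -- rpow arithmetic : (k^{-3/4})² * k² = k^{1/2}
    have hc2 : ((k:ℝ) ^ (-(3:ℝ)/4))^2 * (k:ℝ)^2 = (k:ℝ) ^ ((1:ℝ)/2) := by
      rw [← Real.rpow_natCast ((k:ℝ) ^ (-(3:ℝ)/4)) 2, ← Real.rpow_natCast (k:ℝ) 2,
        ← Real.rpow_mul hk0.le, ← Real.rpow_add hk0]
      norm_num
    -- exponential splitting
    have hexp2 : (Real.exp (-((k:ℝ) * s^2) / 2))^2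
        = Real.exp (-((k:ℝ)/2) * s^2) * Real.exp (-((k:ℝ)/4) * s^2) * Real.exp (-((k:ℝ)/4) * s^2) := by
      rw [pow_two, ← Real.exp_add, ← Real.exp_add, ← Real.exp_add]
      ring_nf
    -- (|s|+2)² exp(-k s²/4) ≤ 16
    have h16 : (|s| + 2)^2 * Real.exp (-((k:ℝ)/4) * s^2) ≤ 16 := by
      have e1 : Real.exp (-((k:ℝ)/4) * s^2) ≤ Real.exp (-(1/4) * s^2) :=
        Real.exp_le_exp.2 (by nlinarith [sq_nonneg s])
      have h3 : s^2/4 + 1 ≤ Real.exp (s^2/4) := by linarith [Real.add_one_le_exp (s^2/4)]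
      have h4 : Real.exp (-(1/4) * s^2) = (Real.exp (s^2/4))⁻¹ := by
        rw [← Real.exp_neg]; ring_nf
      have hpos : (0:ℝ) < Real.exp (s^2/4) := Real.exp_pos _
      have h5 : (|s| + 2)^2 ≤ 16 * Real.exp (s^2/4) := by
        nlinarith [_root_.sq_abs s, sq_nonneg (|s| - 2), abs_nonneg s, h3, sq_nonneg s]
      calc (|s| + 2)^2 * Real.exp (-((k:ℝ)/4) * s^2)
          ≤ (|s| + 2)^2 * Real.exp (-(1/4) * s^2) :=
            mul_le_mul_of_nonneg_left e1 (by positivity)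
        _ = (|s| + 2)^2 * (Real.exp (s^2/4))⁻¹ := by rw [h4]
        _ ≤ 16 := by rw [mul_inv_le_iff₀ hpos]; linarith
    -- exp(-k s²/2) ≤ exp(-√k/2) on S
    have hconc : Real.exp (-((k:ℝ)/2) * s^2) ≤ Real.exp (-(Real.sqrt k)/2) := by
      apply Real.exp_le_exp.2
      have h1 : ((k:ℝ) ^ (-(1:ℝ)/4))^2 ≤ s^2 := by
        rw [← _root_.sq_abs s]
        exact pow_le_pow_left₀ (Real.rpow_nonneg hk0.le _) hxS.le 2
      have h2 : ((k:ℝ) ^ (-(1:ℝ)/4))^2 = (k:ℝ) ^ (-(1:ℝ)/2) := by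
        rw [← Real.rpow_natCast ((k:ℝ) ^ (-(1:ℝ)/4)) 2, ← Real.rpow_mul hk0.le]
        norm_num
      have h3 : (k:ℝ) * (k:ℝ) ^ (-(1:ℝ)/2) = Real.sqrt k := by
        rw [Real.sqrt_eq_rpow]
        nth_rewrite 1 [← Real.rpow_one (k:ℝ)]
        rw [← Real.rpow_add hk0]
        norm_num
      have h4 : Real.sqrt k ≤ (k:ℝ) * s^2 := by
        rw [← h3]
        gcongr
        rw [← h2]; exact h1
      linarith [h4]
    -- combine
    calc ((k:ℝ) ^ (-(3:ℝ)/4))^2 * (Real.exp (-((k:ℝ) * s^2) / 2) * ((k:ℝ) * (|s| + 2) * Cb))^2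
        = (((k:ℝ) ^ (-(3:ℝ)/4))^2 * (k:ℝ)^2) * Cb^2 *
          ((Real.exp (-((k:ℝ) * s^2) / 2))^2 * (|s| + 2)^2) := by ring
      _ = (k:ℝ) ^ ((1:ℝ)/2) * Cb^2 *
          (Real.exp (-((k:ℝ)/2) * s^2) * ((|s| + 2)^2 * Real.exp (-((k:ℝ)/4) * s^2)) *
            Real.exp (-((k:ℝ)/4) * s^2)) := by rw [hc2, hexp2]; ring
      _ ≤ (k:ℝ) ^ ((1:ℝ)/2) * Cb^2 *
          (Real.exp (-(Real.sqrt k)/2) * 16 * Real.exp (-((k:ℝ)/4) * s^2)) := by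
            gcongr <;> positivity
      _ = M x := by rw [hM, hsdef]; ring
  -- measurability of the integrand
  have hmeas : AEStronglyMeasurable (fun x : ℝ =>
      ‖(((k:ℝ) ^ (-(3:ℝ)/4) : ℝ) : ℂ) * deriv F x‖^2) (volume.restrict S) := by
    apply Measurable.aestronglyMeasurable
    exact ((measurable_const.mul (measurable_deriv F)).norm.pow_const 2)
  -- integrability of the integrand on S
  have hint : IntegrableOn (fun x : ℝ =>
      ‖(((k:ℝ) ^ (-(3:ℝ)/4) : ℝ) : ℂ) * deriv F x‖^2) S := by
    apply Integrable.mono' hMint.integrableOn hmeas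
    filter_upwards [ae_restrict_mem hSmeas] with x hx
    have h := hpoint x hx
    rwa [Real.norm_eq_abs, _root_.abs_of_nonneg (pow_nonneg (norm_nonneg _) 2)]
  -- main chain
  calc (∫ x in S, ‖(((k:ℝ) ^ (-(3:ℝ)/4) : ℝ) : ℂ) * deriv F x‖^2)
      ≤ ∫ x in S, M x := setIntegral_mono_on hint hMint.integrableOn hSmeas hpoint
    _ ≤ ∫ x, M x := setIntegral_le_integral hMint (ae_of_all _ fun x => by
        rw [hM]; dsimp only; positivity)
    _ ≤ (32 * Real.sqrt Real.pi * Cb ^ 2 + 1) * Real.exp (-(Real.sqrt k)/2) := by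
        rw [hM]
        rw [integral_const_mul, integral_const_mul]
        rw [integral_sub_right_eq_self (fun x => Real.exp (-((k:ℝ)/4) * x^2)) x0]
        rw [integral_gaussian]
        have hval : (k:ℝ) ^ ((1:ℝ)/2) * Real.sqrt (Real.pi / ((k:ℝ)/4))
            = 2 * Real.sqrt Real.pi := by
          have ha : (0:ℝ) ≤ (k:ℝ) ^ ((1:ℝ)/2) * Real.sqrt (Real.pi / ((k:ℝ)/4)) := by
            positivity
          have hsq : ((k:ℝ) ^ ((1:ℝ)/2) * Real.sqrt (Real.pi / ((k:ℝ)/4)))^2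
              = (2 * Real.sqrt Real.pi)^2 := by
            rw [mul_pow, mul_pow, ← Real.sqrt_eq_rpow, Real.sq_sqrt hk0.le,
              Real.sq_sqrt (by positivity : (0:ℝ) ≤ Real.pi / ((k:ℝ)/4)),
              Real.sq_sqrt Real.pi_pos.le]
            field_simp
            ring
          calc (k:ℝ) ^ ((1:ℝ)/2) * Real.sqrt (Real.pi / ((k:ℝ)/4))
              = Real.sqrt (((k:ℝ) ^ ((1:ℝ)/2) * Real.sqrt (Real.pi / ((k:ℝ)/4)))^2) :=
                (Real.sqrt_sq ha).symm
            _ = Real.sqrt ((2 * Real.sqrt Real.pi)^2) := by rw [hsq]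
            _ = 2 * Real.sqrt Real.pi := Real.sqrt_sq (by positivity)
        calc Real.exp (-(Real.sqrt k)/2) * (16 * Cb ^ 2 * (k:ℝ) ^ ((1:ℝ)/2) *
              Real.sqrt (Real.pi / ((k:ℝ)/4)))
            = 32 * Real.sqrt Real.pi * Cb ^ 2 * Real.exp (-(Real.sqrt k)/2) := by
              rw [mul_assoc (16 * Cb ^ 2), hval]; ring
          _ ≤ (32 * Real.sqrt Real.pi * Cb ^ 2 + 1) * Real.exp (-(Real.sqrt k)/2) :=
              mul_le_mul_of_nonneg_right (by linarith) (Real.exp_pos _).le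
end

section
/- Define $\varphi(x) = \frac{i}{2}(x-x_0)^2 + (x - x_0)$ for fixed $x_0 \in \mathbb{R}$, and for $k \in \mathbb{N}$ and a fixed $\eta \in C^1_b(\mathbb{R})$ let $\sigma_k(x) = k^{-3/4}\partial_x\left(e^{ik\varphi(x)}\eta(x)\right)$. Then $\lim_{k\to\infty}\int_{\mathbb{R}} |\sigma_k(x)|^2\,dx = \sqrt{\pi}\,|\eta(x_0)|^2$. -/
open MeasureTheory Complex Filter Topology

noncomputable def hfun (x0 : ℝ) (η : ℝ → ℂ) (k : ℕ) (t : ℝ) : ℝ :=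
  Real.exp (-t^2) *
    ‖(Complex.I - ((t / Real.sqrt k : ℝ) : ℂ)) * η (x0 + t / Real.sqrt k)
      + (1/(k:ℂ)) * deriv η (x0 + t / Real.sqrt k)‖^2

lemma deriv_formula (x0 : ℝ) (η : ℝ → ℂ) (hη : Differentiable ℝ η) (k : ℕ) (x : ℝ) :
    deriv (fun y : ℝ => Complex.exp (Complex.I * (k:ℂ) *
        ((Complex.I/2) * ((y:ℂ) - (x0:ℂ))^2 + ((y:ℂ) - (x0:ℂ)))) * η y) x
    = Complex.exp (Complex.I * (k:ℂ) *
        ((Complex.I/2) * ((x:ℂ) - (x0:ℂ))^2 + ((x:ℂ) - (x0:ℂ)))) *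
      ((Complex.I * (k:ℂ) * (Complex.I * ((x:ℂ) - (x0:ℂ)) + 1)) * η x + deriv η x) := by
  have hy : HasDerivAt (fun y : ℝ => ((y:ℂ) - (x0:ℂ))) 1 x := by
    simpa using (Complex.ofRealCLM.hasDerivAt (x := x)).sub_const (x0:ℂ)
  have h1 : HasDerivAt (fun y : ℝ => Complex.I * (k:ℂ) *
      ((Complex.I/2) * ((y:ℂ) - (x0:ℂ))^2 + ((y:ℂ) - (x0:ℂ))))
      (Complex.I * (k:ℂ) * (Complex.I * ((x:ℂ) - (x0:ℂ)) + 1)) x := by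
    have hsq : HasDerivAt (fun y : ℝ => ((y:ℂ) - (x0:ℂ))^2) (2*((x:ℂ)-(x0:ℂ))) x := by
      have h3 := hy.fun_mul hy
      simp_rw [← pow_two] at h3
      exact h3.congr_deriv (by ring)
    have h2 := HasDerivAt.const_mul (Complex.I * (k:ℂ)) ((HasDerivAt.const_mul (Complex.I/2) hsq).fun_add hy)
    exact h2.congr_deriv (by ring)
  rw [(h1.cexp.fun_mul (hη x).hasDerivAt).deriv]
  ring

lemma pointwise_eq (x0 : ℝ) (η : ℝ → ℂ) (hη : Differentiable ℝ η) {k : ℕ} (hk : 1 ≤ k) (x : ℝ) :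
    ‖(((k:ℝ) ^ (-(3:ℝ)/4) : ℝ) : ℂ) *
        deriv (fun y : ℝ =>
          Complex.exp (Complex.I * (k:ℂ) *
            ((Complex.I/2) * ((y:ℂ) - (x0:ℂ))^2 + ((y:ℂ) - (x0:ℂ)))) * η y) x‖^2
      = Real.sqrt k * hfun x0 η k (Real.sqrt k * (x - x0)) := by
  have hk0 : (0:ℝ) < k := by exact_mod_cast Nat.pos_of_ne_zero (by omega)
  have hs : 0 < Real.sqrt k := Real.sqrt_pos.mpr hk0
  set u : ℝ := x - x0 with hu
  have hcan : Real.sqrt k * u / Real.sqrt k = u := by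
    field_simp
  have harg : x0 + Real.sqrt k * u / Real.sqrt k = x := by
    rw [hcan, hu]; ring
  rw [deriv_formula x0 η hη k x]
  unfold hfun
  rw [harg, hcan]
  have hw : (x:ℂ) - (x0:ℂ) = ((u:ℝ):ℂ) := by push_cast [hu]; ring
  rw [hw]
  have hkc : (k:ℂ) ≠ 0 := Nat.cast_ne_zero.mpr (by omega)
  have hA : (Complex.I * (k:ℂ) * (Complex.I * ((u:ℝ):ℂ) + 1)) * η x + deriv η x
      = (k:ℂ) * ((Complex.I - ((u:ℝ):ℂ)) * η x + (1/(k:ℂ)) * deriv η x) := by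
    field_simp
    ring_nf
    simp [Complex.I_sq]
    ring
  rw [hA]
  have hzre : (Complex.I * (k:ℂ) * ((Complex.I/2) * ((u:ℝ):ℂ)^2 + ((u:ℝ):ℂ))).re
      = -((k:ℝ)*u^2)/2 := by
    have hz : Complex.I * (k:ℂ) * ((Complex.I/2) * ((u:ℝ):ℂ)^2 + ((u:ℝ):ℂ))
        = (((-((k:ℝ)*u^2)/2 : ℝ)):ℂ) + (((k:ℝ)*u : ℝ):ℂ)*Complex.I := by
      push_cast
      linear_combination ((k:ℂ)*((u:ℝ):ℂ)^2/2) * Complex.I_sq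
    rw [hz]
    simp [← Complex.ofReal_pow]
  rw [norm_mul, norm_mul, norm_mul, mul_pow, mul_pow, mul_pow]
  rw [Complex.norm_real, Real.norm_eq_abs, _root_.abs_of_nonneg (Real.rpow_nonneg hk0.le _)]
  rw [Complex.norm_exp, hzre]
  rw [Complex.norm_natCast]
  have e1 : ((k:ℝ) ^ (-(3:ℝ)/4))^2 = (k:ℝ) ^ (-(3:ℝ)/2) := by
    rw [← Real.rpow_natCast ((k:ℝ) ^ (-(3:ℝ)/4)) 2, ← Real.rpow_mul hk0.le]
    norm_num
  have e2 : (Real.exp (-((k:ℝ)*u^2)/2))^2 = Real.exp (-(Real.sqrt k * u)^2) := by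
    rw [← Real.exp_nat_mul]
    congr 1
    rw [mul_pow, Real.sq_sqrt hk0.le]
    ring
  have e3 : (k:ℝ) ^ (-(3:ℝ)/2) * (k:ℝ)^2 = Real.sqrt k := by
    rw [← Real.rpow_natCast (k:ℝ) 2, ← Real.rpow_add hk0, Real.sqrt_eq_rpow]
    norm_num
  rw [e1, e2]
  calc (k:ℝ) ^ (-(3:ℝ)/2) * (Real.exp (-(Real.sqrt k * u)^2) * ((k:ℝ)^2 * ‖_‖^2))
      = ((k:ℝ) ^ (-(3:ℝ)/2) * (k:ℝ)^2) * (Real.exp (-(Real.sqrt k * u)^2) * ‖_‖^2) := by ring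
    _ = _ := by rw [e3]

lemma hfun_meas (x0 : ℝ) (η : ℝ → ℂ) (hη : Differentiable ℝ η) (k : ℕ) :
    Measurable (hfun x0 η k) := by
  have m1 : Measurable (fun t : ℝ => x0 + t / Real.sqrt k) :=
    measurable_const.add (measurable_id.div_const _)
  have m2 : Measurable (deriv η) := measurable_deriv η
  have c1 : Continuous (fun t : ℝ => (Complex.I - ((t / Real.sqrt k : ℝ) : ℂ))) :=
    continuous_const.sub (Complex.continuous_ofReal.comp (continuous_id.div_const _))
  have mA : Measurable (fun t : ℝ =>
      (Complex.I - ((t / Real.sqrt k : ℝ) : ℂ)) * η (x0 + t / Real.sqrt k)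
        + (1/(k:ℂ)) * deriv η (x0 + t / Real.sqrt k)) :=
    ((c1.measurable).mul ((hη.continuous.measurable).comp m1)).add
      (measurable_const.mul (m2.comp m1))
  exact ((Real.continuous_exp.comp (continuous_pow 2).neg).measurable).mul
    ((mA.norm).pow_const 2)

/-- `L²`-mass limit of the Gaussian beam: with
`σ_k(x) = k^{-3/4} ∂ₓ(e^{ikφ(x)} η(x))`, `φ(x) = (i/2)(x-x₀)² + (x-x₀)`, one has
`∫_ℝ |σ_k|² → √π |η(x₀)|²` as `k → ∞`. -/
theorem stmt_11 (x0 : ℝ) (η : ℝ → ℂ) (hη : Differentiable ℝ η) (Cb : ℝ)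
    (hbound : ∀ x, ‖η x‖ ≤ Cb ∧ ‖deriv η x‖ ≤ Cb) :
    Tendsto (fun k : ℕ =>
      ∫ x : ℝ,
        ‖(((k:ℝ) ^ (-(3:ℝ)/4) : ℝ) : ℂ) *
          deriv (fun y : ℝ =>
            Complex.exp (Complex.I * (k:ℂ) *
              ((Complex.I/2) * ((y:ℂ) - (x0:ℂ))^2 + ((y:ℂ) - (x0:ℂ)))) * η y) x‖^2)
      atTop (nhds (Real.sqrt Real.pi * ‖η x0‖^2)) := by
  have hCb : 0 ≤ Cb := le_trans (norm_nonneg _) (hbound x0).1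
  -- the bound for DCT
  set bound : ℝ → ℝ := fun t => Real.exp (-t^2) * (Cb*(2 + |t|))^2 with hbd
  -- norm estimate
  have hnorm : ∀ (k : ℕ) (t : ℝ),
      ‖(Complex.I - ((t / Real.sqrt k : ℝ) : ℂ)) * η (x0 + t / Real.sqrt k)
        + (1/(k:ℂ)) * deriv η (x0 + t / Real.sqrt k)‖ ≤ Cb*(2 + |t|) := by
    intro k t
    set y := x0 + t / Real.sqrt k
    have h1 : ‖(Complex.I - ((t / Real.sqrt k : ℝ) : ℂ))‖ ≤ 1 + |t| := by
      refine le_trans (norm_sub_le _ _) ?_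
      have : ‖((t / Real.sqrt k : ℝ) : ℂ)‖ = |t| / Real.sqrt k := by
        rw [Complex.norm_real, Real.norm_eq_abs, abs_div, _root_.abs_of_nonneg (Real.sqrt_nonneg _)]
      rw [Complex.norm_I, this]
      gcongr
      rcases Nat.eq_zero_or_pos k with hk | hk
      · simp [hk]
      · have h2 : 1 ≤ Real.sqrt k := by
          rw [show (1:ℝ) = Real.sqrt 1 by simp]
          exact Real.sqrt_le_sqrt (by exact_mod_cast hk)
        exact div_le_self (abs_nonneg t) h2
    have h2 : ‖(1/(k:ℂ))‖ ≤ 1 := by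
      rcases Nat.eq_zero_or_pos k with hk | hk
      · simp [hk]
      · rw [norm_div, norm_one, Complex.norm_natCast]
        rw [div_le_one (by exact_mod_cast hk)]
        exact_mod_cast hk
    calc ‖_ + _‖ ≤ ‖(Complex.I - ((t / Real.sqrt k : ℝ) : ℂ)) * η y‖ + ‖(1/(k:ℂ)) * deriv η y‖ :=
          norm_add_le _ _
      _ ≤ (1 + |t|) * Cb + 1 * Cb := by
          rw [norm_mul, norm_mul]
          exact add_le_add
            (mul_le_mul h1 (hbound y).1 (norm_nonneg _) (by positivity))
            (mul_le_mul h2 (hbound y).2 (norm_nonneg _) one_pos.le)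
      _ = Cb*(2 + |t|) := by ring
  have hbd_int : Integrable bound := by
    have i1 : Integrable (fun t : ℝ => Real.exp (-1 * t^2)) := integrable_exp_neg_mul_sq one_pos
    have i2 : Integrable (fun t : ℝ => t ^ (2:ℝ) * Real.exp (-1 * t^2)) :=
      integrable_rpow_mul_exp_neg_mul_sq one_pos (by norm_num)
    have i2' : Integrable (fun t : ℝ => t^2 * Real.exp (-1 * t^2)) := by
      have : (fun t : ℝ => t ^ (2:ℝ) * Real.exp (-1 * t^2))
          = (fun t : ℝ => t^2 * Real.exp (-1 * t^2)) := by
        funext t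
        rw [show ((2:ℝ) = ((2:ℕ):ℝ)) by norm_num, Real.rpow_natCast]
      rwa [this] at i2
    have ig : Integrable (fun t : ℝ =>
        Cb^2 * (6 * Real.exp (-1*t^2) + 3 * (t^2 * Real.exp (-1*t^2)))) :=
      ((i1.const_mul 6).add (i2'.const_mul 3)).const_mul (Cb^2)
    refine ig.mono' ?_ ?_
    · exact (((Real.continuous_exp.comp (continuous_pow 2).neg).mul
        ((continuous_const.mul (continuous_const.add _root_.continuous_abs)).pow 2)).measurable).aestronglyMeasurable
    · filter_upwards with t
      have he : (0:ℝ) < Real.exp (-t^2) := Real.exp_pos _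
      have h1 : (2 + |t|)^2 ≤ 6 + 3*t^2 := by
        nlinarith [_root_.sq_abs t, sq_nonneg (|t| - 1), abs_nonneg t]
      have : bound t ≤ Cb^2 * (6 + 3*t^2) * Real.exp (-t^2) := by
        rw [hbd]
        have := mul_le_mul_of_nonneg_left h1 (sq_nonneg Cb)
        calc Real.exp (-t^2) * (Cb*(2+|t|))^2 = Cb^2*(2+|t|)^2 * Real.exp (-t^2) := by ring
          _ ≤ Cb^2 * (6 + 3*t^2) * Real.exp (-t^2) := by
              apply mul_le_mul_of_nonneg_right _ he.le
              calc Cb^2*(2+|t|)^2 ≤ Cb^2*(6+3*t^2) := this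
                _ = Cb^2 * (6 + 3*t^2) := by ring
        
      rw [Real.norm_eq_abs, _root_.abs_of_nonneg (by positivity : (0:ℝ) ≤ bound t)]
      refine le_trans this (le_of_eq ?_)
      ring_nf
  -- pointwise limit
  have hlim : ∀ t : ℝ, Tendsto (fun k : ℕ => hfun x0 η k t) atTop
      (𝓝 (Real.exp (-t^2) * ‖η x0‖^2)) := by
    intro t
    have hd : Tendsto (fun k : ℕ => t / Real.sqrt k) atTop (𝓝 0) := by
      have h1 : Tendsto (fun k : ℕ => Real.sqrt (1/(k:ℝ))) atTop (𝓝 0) := by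
        exact (Real.continuous_sqrt.tendsto' 0 0 (by simp)).comp
          tendsto_one_div_atTop_nhds_zero_nat
      have h2 : Tendsto (fun k : ℕ => t * Real.sqrt (1/(k:ℝ))) atTop (𝓝 (t * 0)) :=
        h1.const_mul t
      rw [mul_zero] at h2
      refine h2.congr fun k => ?_
      rw [one_div, Real.sqrt_inv, ← div_eq_mul_inv]
    have ha : Tendsto (fun k : ℕ => x0 + t / Real.sqrt k) atTop (𝓝 x0) := by
      simpa using (tendsto_const_nhds (x := x0)).add hd
    have hη1 : Tendsto (fun k : ℕ => η (x0 + t / Real.sqrt k)) atTop (𝓝 (η x0)) :=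
      (hη.continuous.tendsto x0).comp ha
    have hc : Tendsto (fun k : ℕ => (Complex.I - ((t / Real.sqrt k : ℝ):ℂ))) atTop
        (𝓝 Complex.I) := by
      have h3 := (Complex.continuous_ofReal.tendsto 0).comp hd
      simpa using (tendsto_const_nhds (x := Complex.I)).sub h3
    have hpart1 : Tendsto (fun k : ℕ =>
        (Complex.I - ((t / Real.sqrt k : ℝ):ℂ)) * η (x0 + t / Real.sqrt k)) atTop
        (𝓝 (Complex.I * η x0)) := hc.mul hη1
    have hpart2 : Tendsto (fun k : ℕ =>
        (1/(k:ℂ)) * deriv η (x0 + t / Real.sqrt k)) atTop (𝓝 0) := by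
      have hg : Tendsto (fun k : ℕ => (1/(k:ℝ)) * Cb) atTop (𝓝 0) := by
        simpa using tendsto_one_div_atTop_nhds_zero_nat.mul_const Cb
      refine squeeze_zero_norm (fun k => ?_) hg
      rw [norm_mul]
      apply mul_le_mul _ (hbound _).2 (norm_nonneg _) (by positivity)
      rcases Nat.eq_zero_or_pos k with hk | hk
      · simp [hk]
      · rw [norm_div, norm_one, Complex.norm_natCast]
    have hA := hpart1.add hpart2
    rw [add_zero] at hA
    have hfinal := (hA.norm.pow 2).const_mul (Real.exp (-t^2))
    simpa [hfun, norm_mul, Complex.norm_I] using hfinal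
  -- dominated convergence
  have hmain : Tendsto (fun k : ℕ => ∫ t : ℝ, hfun x0 η k t) atTop
      (𝓝 (∫ t : ℝ, Real.exp (-t^2) * ‖η x0‖^2)) := by
    refine tendsto_integral_of_dominated_convergence bound
      (fun k => (hfun_meas x0 η hη k).aestronglyMeasurable) hbd_int ?_ ?_
    · intro k
      filter_upwards with t
      have h0 : (0:ℝ) ≤ hfun x0 η k t := by
        unfold hfun; positivity
      rw [Real.norm_eq_abs, _root_.abs_of_nonneg h0]
      unfold hfun
      rw [hbd]
      exact mul_le_mul_of_nonneg_left
        (pow_le_pow_left₀ (norm_nonneg _) (hnorm k t) 2) (Real.exp_pos _).le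
    · filter_upwards with t
      exact hlim t
  have hval : (∫ t : ℝ, Real.exp (-t^2) * ‖η x0‖^2) = Real.sqrt Real.pi * ‖η x0‖^2 := by
    rw [integral_mul_const]
    congr 1
    have := integral_gaussian 1
    simpa using this
  -- change of variables: eventual equality of integrals
  have hkey : (fun k : ℕ => ∫ t : ℝ, hfun x0 η k t) =ᶠ[atTop]
      (fun k : ℕ =>
        ∫ x : ℝ,
          ‖(((k:ℝ) ^ (-(3:ℝ)/4) : ℝ) : ℂ) *
            deriv (fun y : ℝ =>
              Complex.exp (Complex.I * (k:ℂ) *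
                ((Complex.I/2) * ((y:ℂ) - (x0:ℂ))^2 + ((y:ℂ) - (x0:ℂ)))) * η y) x‖^2) := by
    filter_upwards [eventually_ge_atTop 1] with k hk
    have hkpos : (0:ℝ) < k := by exact_mod_cast Nat.pos_of_ne_zero (by omega)
    have hs : (0:ℝ) < Real.sqrt k := Real.sqrt_pos.mpr hkpos
    symm
    have e0 : (∫ x : ℝ,
          ‖(((k:ℝ) ^ (-(3:ℝ)/4) : ℝ) : ℂ) *
            deriv (fun y : ℝ =>
              Complex.exp (Complex.I * (k:ℂ) *
                ((Complex.I/2) * ((y:ℂ) - (x0:ℂ))^2 + ((y:ℂ) - (x0:ℂ)))) * η y) x‖^2)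
        = ∫ x : ℝ, Real.sqrt k * hfun x0 η k (Real.sqrt k * (x - x0)) :=
      integral_congr_ae (Filter.Eventually.of_forall fun x => pointwise_eq x0 η hη hk x)
    rw [e0, MeasureTheory.integral_const_mul]
    have e1 : (∫ x : ℝ, hfun x0 η k (Real.sqrt k * (x - x0)))
        = ∫ u : ℝ, hfun x0 η k (Real.sqrt k * u) := by
      have h4 := MeasureTheory.integral_add_right_eq_self (μ := volume)
        (fun u : ℝ => hfun x0 η k (Real.sqrt k * u)) (-x0)
      simpa [sub_eq_add_neg] using h4
    rw [e1, MeasureTheory.Measure.integral_comp_mul_left (hfun x0 η k) (Real.sqrt k)]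
    rw [smul_eq_mul, abs_inv, _root_.abs_of_nonneg (Real.sqrt_nonneg _)]
    rw [← mul_assoc, mul_inv_cancel₀ hs.ne', one_mul]
  have hfinal := hmain.congr' hkey
  rwa [hval] at hfinal
end

section
/- Let $\Lambda \subset \mathbb{C}$ be a set of pairwise distinct complex numbers with strictly negative real parts, uniformly bounded away from the imaginary axis and with no accumulation point in $\mathbb{C} \setminus \{w_0\}$ for some $w_0 < 0$, and let $(c_\lambda)_{\lambda \in \Lambda}$ be complex coefficients with $\sum_{\lambda \in \Lambda}|c_\lambda| < \infty$. Suppose that the function $\hat F(\tau) = \sum_{\lambda \in \Lambda}\frac{c_\lambda}{\tau - \lambda}$, which is analytic on $\mathbb{C} \setminus \overline{\Lambda}$, vanishes identically on the right half-plane $\{\mathrm{Re}\,\tau > 0\}$. Then $c_\lambda = 0$ for every $\lambda \in \Lambda$. -/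
open Filter Topology

/-- Residue / unique-continuation argument: let `Λ ⊂ ℂ` consist of numbers with real parts
`≤ -δ < 0`, having no accumulation point other than `w₀ < 0`, and let coefficients
`c : Λ → ℂ` be absolutely summable. If `F̂(τ) = ∑_{λ∈Λ} c_λ/(τ-λ)` vanishes on the right
half-plane, then all coefficients vanish. -/
theorem stmt_18 (Λ : Set ℂ) (w0 δ : ℝ) (hw0 : w0 < 0) (hδ : 0 < δ)
    (hre : ∀ lam ∈ Λ, lam.re ≤ -δ)
    (hacc : ∀ z : ℂ, z ≠ (w0 : ℂ) → ¬ AccPt z (Filter.principal Λ))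
    (c : ℂ → ℂ) (hsum : Summable (fun lam : Λ => ‖c lam‖))
    (hvanish : ∀ τ : ℂ, 0 < τ.re → (∑' lam : Λ, c lam / (τ - lam)) = 0) :
    ∀ lam ∈ Λ, c lam = 0 := by
  classical
  set K := closure Λ with hKdef
  have hKclosed : IsClosed K := isClosed_closure
  have hKsub : K ⊆ Λ ∪ {(w0 : ℂ)} := by
    intro z hz
    by_cases hzΛ : z ∈ Λ
    · exact Or.inl hzΛ
    · right
      by_contra hzw
      refine hacc z (by simpa using hzw) ?_
      rw [accPt_principal_iff_clusterPt]
      have hdiff : Λ \ {z} = Λ := by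
        ext y
        simp only [Set.mem_diff, Set.mem_singleton_iff, and_iff_left_iff_imp]
        rintro hy rfl; exact hzΛ hy
      rw [hdiff]
      exact mem_closure_iff_clusterPt.mp hz
  have hKre : ∀ z ∈ K, z.re ≤ -δ := by
    intro z hz
    exact closure_minimal (fun w hw => hre w hw)
      (isClosed_le Complex.continuous_re continuous_const) hz
  have hhalf : ∀ τ : ℂ, 0 < τ.re → τ ∈ Kᶜ := by
    intro τ hτ hmem
    have := hKre τ hmem
    linarith
  -- countability of Λ
  have hcountS : (Λ \ {(w0 : ℂ)}).Countable := by
    have hdisc : DiscreteTopology (Λ \ {(w0 : ℂ)} : Set ℂ) := by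
      rw [discreteTopology_subtype_iff]
      intro x hx
      have h1 : 𝓝[≠] x ⊓ 𝓟 Λ = ⊥ := not_neBot.mp (hacc x hx.2)
      exact eq_bot_mono (inf_le_inf_left _ (principal_mono.mpr Set.diff_subset)) h1
    haveI := hdisc
    have : Countable (Λ \ {(w0 : ℂ)} : Set ℂ) := TopologicalSpace.separableSpace_iff_countable.mp inferInstance
    exact Set.countable_coe_iff.mpr this
  have hcountΛ : Λ.Countable := by
    refine ((hcountS.union (Set.countable_singleton (w0 : ℂ))).mono ?_)
    intro z hz
    by_cases h : z = (w0 : ℂ)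
    · exact Or.inr (by simp [h])
    · exact Or.inl ⟨hz, h⟩
  have hKcount : K.Countable :=
    (hcountΛ.union (Set.countable_singleton _)).mono hKsub
  set F : ℂ → ℂ := fun τ => ∑' lam : Λ, c lam / (τ - lam) with hFdef
  have hUopen : IsOpen Kᶜ := hKclosed.isOpen_compl
  -- separation from K for points in Kᶜ
  have hsepK : ∀ x ∈ Kᶜ, ∃ ρ > 0, ∀ w : ℂ, dist w x < ρ/2 → ∀ lam : Λ, ρ/2 ≤ ‖w - (lam : ℂ)‖ := by
    intro x hx
    obtain ⟨ρ, hρ, hball⟩ := Metric.isOpen_iff.mp hUopen x hx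
    refine ⟨ρ, hρ, fun w hw lam => ?_⟩
    by_contra h
    push_neg at h
    have hmem : (lam : ℂ) ∈ Metric.ball x ρ := by
      have h1 : dist (lam : ℂ) w = ‖w - (lam : ℂ)‖ := by
        rw [dist_eq_norm, norm_sub_rev]
      have h2 : dist (lam : ℂ) x ≤ dist (lam : ℂ) w + dist w x := dist_triangle _ _ _
      rw [Metric.mem_ball]
      rw [h1] at h2
      linarith
    exact hball hmem (subset_closure lam.2)
  have hdiff : DifferentiableOn ℂ F Kᶜ := by
    intro x hx
    obtain ⟨ρ, hρ, hsep⟩ := hsepK x hx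
    have hbound : ∀ (lam : Λ) (w : ℂ), w ∈ Metric.ball x (ρ/2) →
        ‖c lam / (w - lam)‖ ≤ ‖c lam‖ * (2/ρ) := by
      intro lam w hw
      have h1 : ρ/2 ≤ ‖w - (lam : ℂ)‖ := hsep w (Metric.mem_ball.mp hw) lam
      rw [norm_div]
      rw [div_le_iff₀ (by linarith)]
      calc ‖c lam‖ = ‖c lam‖ * (2/ρ) * (ρ/2) := by field_simp
        _ ≤ ‖c lam‖ * (2/ρ) * ‖w - (lam : ℂ)‖ := by
            apply mul_le_mul_of_nonneg_left h1
            positivity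
    have hdb : DifferentiableOn ℂ (fun w : ℂ => ∑' lam : Λ, c lam / (w - lam))
        (Metric.ball x (ρ/2)) := by
      apply Complex.differentiableOn_tsum_of_summable_norm (hsum.mul_right (2/ρ))
      · intro lam
        apply DifferentiableOn.div (differentiableOn_const _)
        · exact (differentiable_id.sub_const _).differentiableOn
        · intro w hw
          have h1 : ρ/2 ≤ ‖w - (lam : ℂ)‖ := hsep w (Metric.mem_ball.mp hw) lam
          intro h
          rw [h, norm_zero] at h1
          linarith
      · exact Metric.isOpen_ball
      · exact fun lam w hw => hbound lam w hw
    exact (hdb.differentiableAt (Metric.ball_mem_nhds x (by positivity))).differentiableWithinAt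
  have hanal : AnalyticOnNhd ℂ F Kᶜ := hdiff.analyticOnNhd hUopen
  have hconn : IsPreconnected (Kᶜ : Set ℂ) := by
    have h2 : (1 : Cardinal) < Module.rank ℝ ℂ := by
      rw [Complex.rank_real_complex]
      norm_num
    exact (hKcount.isPathConnected_compl_of_one_lt_rank h2).isConnected.isPreconnected
  have hzero : Set.EqOn F 0 Kᶜ := by
    apply hanal.eqOn_zero_of_preconnected_of_eventuallyEq_zero hconn
      (z₀ := 1) (hhalf 1 (by norm_num))
    have hmem : {τ : ℂ | 0 < τ.re} ∈ 𝓝 (1 : ℂ) := by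
      apply IsOpen.mem_nhds
      · exact isOpen_lt continuous_const Complex.continuous_re
      · simp
    exact eventuallyEq_of_mem hmem fun τ hτ => hvanish τ hτ
  -- summability of the terms at any point of Kᶜ
  have hterm : ∀ τ ∈ Kᶜ, Summable (fun lam : Λ => c lam / (τ - lam)) := by
    intro τ hτ
    obtain ⟨ρ, hρ, hsep⟩ := hsepK τ hτ
    apply Summable.of_norm
    apply Summable.of_nonneg_of_le (fun lam => norm_nonneg _) _ (hsum.mul_right (2/ρ))
    intro lam
    have h1 : ρ/2 ≤ ‖τ - (lam : ℂ)‖ := hsep τ (by simpa using hρ) lam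
    rw [norm_div, div_le_iff₀ (by linarith)]
    calc ‖c lam‖ = ‖c lam‖ * (2/ρ) * (ρ/2) := by field_simp
      _ ≤ ‖c lam‖ * (2/ρ) * ‖τ - (lam : ℂ)‖ := by
          apply mul_le_mul_of_nonneg_left h1; positivity
  -- key claim: coefficients vanish at points ≠ w0
  have key : ∀ l ∈ Λ, l ≠ (w0 : ℂ) → c l = 0 := by
    intro l hl hlw
    obtain ⟨V, hV, hViso⟩ : ∃ V ∈ 𝓝 l, ∀ y, y ∈ V → y ∈ Λ → y = l := by
      have h := hacc l hlw
      rw [accPt_iff_nhds] at h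
      push_neg at h
      obtain ⟨V, hV, hVh⟩ := h
      exact ⟨V, hV, fun y h1 h2 => hVh y ⟨h1, h2⟩⟩
    obtain ⟨ε₀, hε₀, hball⟩ := Metric.mem_nhds_iff.mp hV
    set ε := min ε₀ (dist l (w0 : ℂ)) with hεdef
    have hεpos : 0 < ε := lt_min hε₀ (dist_pos.mpr hlw)
    have hsepΛ : ∀ μ ∈ Λ, μ ≠ l → ε ≤ dist μ l := by
      intro μ hμ hne
      by_contra h
      push_neg at h
      have hmem : μ ∈ Metric.ball l ε₀ :=
        Metric.mem_ball.mpr (lt_of_lt_of_le h (min_le_left _ _))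
      exact hne (hViso μ (hball hmem) hμ)
    have hpunct : ∀ τ : ℂ, τ ≠ l → dist τ l < ε → τ ∈ Kᶜ := by
      intro τ hτ hd hmem
      rcases hKsub hmem with hτΛ | hτw
      · have := hsepΛ τ hτΛ hτ
        linarith
      · rw [Set.mem_singleton_iff] at hτw
        subst hτw
        have h1 : ε ≤ dist l (w0 : ℂ) := min_le_right _ _
        rw [dist_comm] at hd
        linarith
    set M : ℝ := (∑' lam : Λ, ‖c lam‖) * (2/ε) with hMdef
    have hMnn : 0 ≤ M := by
      apply mul_nonneg
      · exact tsum_nonneg fun _ => norm_nonneg _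
      · positivity
    have hest : ∀ τ : ℂ, τ ≠ l → dist τ l < ε/2 → ‖c l‖ ≤ dist τ l * M := by
      intro τ hτ hd
      have hτU : τ ∈ Kᶜ := hpunct τ hτ (by linarith)
      have hFτ : F τ = 0 := hzero hτU
      have hsumτ := hterm τ hτU
      have hsplit := Summable.tsum_eq_add_tsum_ite hsumτ (⟨l, hl⟩ : Λ)
      have hFτ' : (∑' lam : Λ, c lam / (τ - lam)) = 0 := hFτ
      rw [hFτ'] at hsplit
      have heq : c l / (τ - l) =
          -∑' lam : Λ, (if lam = (⟨l, hl⟩ : Λ) then 0 else c lam / (τ - lam)) := by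
        have h := hsplit.symm
        exact eq_neg_of_add_eq_zero_left h
      have hbnd : ∀ lam : Λ,
          ‖(if lam = (⟨l, hl⟩ : Λ) then 0 else c lam / (τ - lam))‖ ≤ ‖c lam‖ * (2/ε) := by
        intro lam
        by_cases hcase : lam = (⟨l, hl⟩ : Λ)
        · simp only [hcase, if_pos]
          simp
          positivity
        · simp only [if_neg hcase]
          have hne : (lam : ℂ) ≠ l := fun h => hcase (Subtype.ext h)
          have h1 : ε ≤ dist (lam : ℂ) l := hsepΛ lam lam.2 hne
          have h2 : dist (lam : ℂ) l ≤ dist (lam : ℂ) τ + dist τ l := dist_triangle _ _ _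
          have h3 : ε/2 ≤ ‖τ - (lam : ℂ)‖ := by
            have : dist (lam : ℂ) τ = ‖τ - (lam : ℂ)‖ := by
              rw [dist_comm, dist_eq_norm]
            linarith
          rw [norm_div, div_le_iff₀ (by linarith)]
          calc ‖c lam‖ = ‖c lam‖ * (2/ε) * (ε/2) := by field_simp
            _ ≤ ‖c lam‖ * (2/ε) * ‖τ - (lam : ℂ)‖ := by
                apply mul_le_mul_of_nonneg_left h3; positivity
      have hsum2 : Summable (fun lam : Λ =>
          ‖(if lam = (⟨l, hl⟩ : Λ) then 0 else c lam / (τ - lam))‖) :=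
        Summable.of_nonneg_of_le (fun _ => norm_nonneg _) hbnd (hsum.mul_right (2/ε))
      have hnorm : ‖c l / (τ - l)‖ ≤ M := by
        rw [heq, norm_neg]
        calc ‖∑' lam : Λ, (if lam = (⟨l, hl⟩ : Λ) then 0 else c lam / (τ - lam))‖
            ≤ ∑' lam : Λ, ‖(if lam = (⟨l, hl⟩ : Λ) then 0 else c lam / (τ - lam))‖ :=
              norm_tsum_le_tsum_norm hsum2
          _ ≤ ∑' lam : Λ, ‖c lam‖ * (2/ε) := Summable.tsum_le_tsum hbnd hsum2 (hsum.mul_right (2/ε))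
          _ = M := by rw [hMdef, tsum_mul_right]
      have hτl : ‖τ - l‖ = dist τ l := (dist_eq_norm τ l).symm
      have hτlpos : 0 < ‖τ - l‖ := by
        rw [hτl]
        exact dist_pos.mpr hτ
      rw [norm_div, div_le_iff₀ hτlpos] at hnorm
      rw [hτl] at hnorm
      linarith [hnorm, mul_comm M (dist τ l)]
    have hfinal : ∀ η : ℝ, 0 < η → ‖c l‖ ≤ η := by
      intro η hη
      set t := min (ε/4) (η/(M+1)) with htdef
      have ht : 0 < t := lt_min (by linarith) (by positivity)
      set τ : ℂ := l + (t : ℝ) with hτdef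
      have hτne : τ ≠ l := by
        simp only [hτdef, ne_eq, add_eq_left]
        exact_mod_cast ne_of_gt ht
      have hdist : dist τ l = t := by
        rw [dist_eq_norm]
        simp only [hτdef, add_sub_cancel_left]
        rw [Complex.norm_real]
        exact abs_of_pos ht
      have h1 : dist τ l < ε/2 := by
        rw [hdist]
        calc t ≤ ε/4 := min_le_left _ _
          _ < ε/2 := by linarith
      have h2 := hest τ hτne h1
      rw [hdist] at h2
      calc ‖c l‖ ≤ t * M := h2
        _ ≤ (η/(M+1)) * M := mul_le_mul_of_nonneg_right (min_le_right _ _) hMnn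
        _ ≤ η := by
            rw [div_mul_eq_mul_div, div_le_iff₀ (by linarith)]
            nlinarith
    have hle : ‖c l‖ ≤ 0 := by
      apply le_of_forall_pos_le_add
      intro η hη
      simpa using hfinal η hη
    exact norm_le_zero_iff.mp hle
  intro lam hlam
  by_cases hlw : lam = (w0 : ℂ)
  · have h1 := hvanish 1 (by norm_num)
    have h2 : (∑' μ : Λ, c μ / (1 - μ)) = c lam / (1 - lam) := by
      apply tsum_eq_single (⟨lam, hlam⟩ : Λ)
      intro b hb
      rcases eq_or_ne (b : ℂ) (w0 : ℂ) with h | h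
      · exact absurd (Subtype.ext (h.trans hlw.symm)) hb
      · rw [key b b.2 h, zero_div]
    rw [h2] at h1
    have hne : (1 : ℂ) - lam ≠ 0 := by
      intro h
      have h3 : lam = 1 := by
        have := sub_eq_zero.mp h
        exact this.symm
      have := hre lam hlam
      rw [h3] at this
      simp at this
      linarith
    exact (div_eq_zero_iff.mp h1).resolve_right hne
  · exact key lam hlam hlw
end
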